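/- arXiv:1807.08020 — 3 statements merged into one kernel-verified Lean document; each statement's English description precedes it below -/
import Mathlib

section
/- In a bounded distributive lattice D, the relation ≡ defined via ⪯ is the largest lattice congruence θ on D with the property that θ(a, ⊤) implies a = ⊤; i.e., any congruence θ with this property is contained in ≡. -/
def preceq {D : Type*} [Lattice D] [BoundedOrder D] (a b : D) : Prop :=
  ∀ c : D, a ⊔ c = ⊤ → b ⊔ c = ⊤

def equivRel {D : Type*} [Lattice D] [BoundedOrder D] (a b : D) : Prop :=
  preceq a b ∧ preceq b a

/-- `≡` is the largest lattice congruence `θ` such that `θ a ⊤` implies `a = ⊤`. -/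
theorem equivRel_largest_congruence {D : Type*} [DistribLattice D] [BoundedOrder D]
    (θ : D → D → Prop)
    (hrefl : ∀ a, θ a a) (hsymm : ∀ a b, θ a b → θ b a)
    (htrans : ∀ a b c, θ a b → θ b c → θ a c)
    (hinf : ∀ a b c d, θ a b → θ c d → θ (a ⊓ c) (b ⊓ d))
    (hsup : ∀ a b c d, θ a b → θ c d → θ (a ⊔ c) (b ⊔ d))
    (htop : ∀ a, θ a ⊤ → a = ⊤) :
    ∀ a b : D, θ a b → equivRel a b := by
  intro a b hab
  constructor
  · intro c hc
    apply htop
    apply htrans _ (a ⊔ c)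
    · exact hsup b a c c (hsymm a b hab) (hrefl c)
    · rw [hc]; exact hrefl ⊤
  · intro c hc
    apply htop
    apply htrans _ (b ⊔ c)
    · exact hsup a b c c hab (hrefl c)
    · rw [hc]; exact hrefl ⊤
end

section
/- Let D be a bounded distributive lattice and ≡ the congruence defined by mutual ⪯. If the quotient lattice D/≡ has the property that every ideal is an intersection of maximal ideals, then for every ideal I of D fixed by χ (i.e., χ(I) = I), also ξ(I) = I; hence χ = ξ on ideals of D. -/
def xiSet {D : Type*} [DistribLattice D] [BoundedOrder D] (I : Set D) : Set D :=
  {a | ∀ b : D, a ⊔ b = ⊤ → ∃ c ∈ I, c ⊔ b = ⊤}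

def chiSet {D : Type*} [DistribLattice D] [BoundedOrder D] (I : Set D) : Set D :=
  {a | ∃ c ∈ I, preceq a c}

def IsMaximalIdeal {D : Type*} [DistribLattice D] [BoundedOrder D] (M : Order.Ideal D) : Prop :=
  (M : Set D) ≠ Set.univ ∧
    ∀ N : Order.Ideal D, (N : Set D) ≠ Set.univ → M ≤ N → N = M

def IsInterOfMaximal {D : Type*} [DistribLattice D] [BoundedOrder D] (I : Order.Ideal D) : Prop :=
  ∃ S : Set (Order.Ideal D), (∀ M ∈ S, IsMaximalIdeal M) ∧
    (I : Set D) = ⋂ M ∈ S, (M : Set D)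

section Aux

variable {D : Type*} [DistribLattice D] [BoundedOrder D]

lemma preceq_refl (a : D) : preceq a a := fun _ h => h

lemma preceq_trans {a b c : D} (h1 : preceq a b) (h2 : preceq b c) : preceq a c :=
  fun x hx => h2 x (h1 x hx)

lemma preceq_of_le {a b : D} (h : a ≤ b) : preceq a b := fun c hc =>
  top_le_iff.mp (hc ▸ sup_le_sup_right h c)

lemma preceq_sup {a b a' b' : D} (h : preceq a b) (h' : preceq a' b') :
    preceq (a ⊔ a') (b ⊔ b') := by
  intro c hc
  have h1 : a ⊔ (a' ⊔ c) = ⊤ := by rw [← sup_assoc]; exact hc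
  have h2 : a' ⊔ (b ⊔ c) = ⊤ := by
    have := h _ h1
    rwa [sup_left_comm] at this
  have := h' _ h2
  rw [sup_left_comm] at this
  rwa [← sup_assoc] at this

/-- `χ(I)` as an order ideal. -/
def chiIdeal (I : Order.Ideal D) : Order.Ideal D where
  carrier := chiSet (I : Set D)
  lower' := by
    rintro a b hba ⟨c, hc, hac⟩
    exact ⟨c, hc, preceq_trans (preceq_of_le hba) hac⟩
  nonempty' := by
    obtain ⟨x, hx⟩ := I.nonempty
    exact ⟨x, x, hx, preceq_refl x⟩
  directed' := by
    rintro a ⟨c, hc, hac⟩ a' ⟨c', hc', hac'⟩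
    exact ⟨a ⊔ a', ⟨c ⊔ c', I.sup_mem hc hc', preceq_sup hac hac'⟩,
      le_sup_left, le_sup_right⟩

lemma chiSet_idem (I : Order.Ideal D) :
    chiSet (chiSet (I : Set D)) = chiSet (I : Set D) := by
  ext a
  constructor
  · rintro ⟨c, ⟨d, hd, hcd⟩, hac⟩
    exact ⟨d, hd, preceq_trans hac hcd⟩
  · intro ha
    exact ⟨a, ha, preceq_refl a⟩

lemma subset_chiSet (I : Set D) : I ⊆ chiSet I := fun a ha => ⟨a, ha, preceq_refl a⟩

lemma chiSet_subset_xiSet (I : Set D) : chiSet I ⊆ xiSet I := by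
  rintro a ⟨c, hc, hac⟩ b hb
  exact ⟨c, hc, hac b hb⟩

lemma xiSet_mono {I J : Set D} (h : I ⊆ J) : xiSet I ⊆ xiSet J := by
  intro a ha b hb
  obtain ⟨c, hc, hcb⟩ := ha b hb
  exact ⟨c, h hc, hcb⟩

end Aux

/-- If the quotient lattice `D/≡` (here presented as a bounded distributive lattice `E`
together with a surjective lattice homomorphism `f : D → E` preserving `⊥` and `⊤` whose
kernel congruence is exactly `≡`) has the property that every ideal is an intersection of
maximal ideals, then every ideal of `D` fixed by `χ` is fixed by `ξ`; hence `χ = ξ` on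
ideals of `D`. -/
theorem chi_eq_xi_of_quotient_jacobson {D : Type*} [DistribLattice D] [BoundedOrder D]
    (E : Type*) [DistribLattice E] [BoundedOrder E] (f : D → E)
    (hsurj : Function.Surjective f)
    (hsup : ∀ a b : D, f (a ⊔ b) = f a ⊔ f b)
    (hinf : ∀ a b : D, f (a ⊓ b) = f a ⊓ f b)
    (hbot : f ⊥ = ⊥) (htop : f ⊤ = ⊤)
    (hker : ∀ a b : D, f a = f b ↔ equivRel a b)
    (hjac : ∀ I : Order.Ideal E, IsInterOfMaximal I) :
    (∀ I : Order.Ideal D, chiSet (I : Set D) = (I : Set D) → xiSet (I : Set D) = (I : Set D)) ∧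
    (∀ I : Order.Ideal D, chiSet (I : Set D) = xiSet (I : Set D)) := by
  -- f reflects ⊤
  have htop_iff : ∀ x : D, f x = ⊤ ↔ x = ⊤ := by
    intro x
    constructor
    · intro hx
      have : equivRel x ⊤ := (hker x ⊤).mp (by rw [hx, htop])
      have := this.2 ⊥ (by simp)
      simpa using this
    · rintro rfl; exact htop
  have hsuptop : ∀ a b : D, a ⊔ b = ⊤ ↔ f a ⊔ f b = ⊤ := by
    intro a b
    rw [← hsup, htop_iff]
  have main : ∀ I : Order.Ideal D, chiSet (I : Set D) = (I : Set D) →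
      xiSet (I : Set D) = (I : Set D) := by
    intro I hchi
    apply Set.Subset.antisymm _ (fun a ha => chiSet_subset_xiSet _ (subset_chiSet _ ha))
    intro a ha
    -- the image ideal in E
    have hlower : ∀ ⦃x y : E⦄, y ≤ x → x ∈ f '' (I : Set D) → y ∈ f '' (I : Set D) := by
      rintro x y hyx ⟨x', hx', rfl⟩
      obtain ⟨y', rfl⟩ := hsurj y
      refine ⟨y' ⊓ x', I.lower inf_le_right hx', ?_⟩
      rw [hinf]
      exact inf_eq_left.mpr hyx
    set J : Order.Ideal E :=
      { carrier := f '' (I : Set D)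
        lower' := hlower
        nonempty' := (I.nonempty).image f
        directed' := by
          rintro _ ⟨x, hx, rfl⟩ _ ⟨y, hy, rfl⟩
          exact ⟨f (x ⊔ y), ⟨x ⊔ y, I.sup_mem hx hy, rfl⟩, by rw [hsup]; exact le_sup_left,
            by rw [hsup]; exact le_sup_right⟩ } with hJ
    obtain ⟨S, hS, hSinter⟩ := hjac J
    -- f a belongs to every maximal ideal in S
    have hfa : f a ∈ (J : Set E) := by
      rw [hSinter]
      simp only [Set.mem_iInter]
      intro M hM
      by_contra hfaM
      -- ideal generated by M and f a is everything
      have hMJ : (J : Set E) ⊆ (M : Set E) := by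
        rw [hSinter]; exact fun x hx => by
          simp only [Set.mem_iInter] at hx; exact hx M hM
      obtain ⟨hMne, hMmax⟩ := hS M hM
      -- construct ideal N = M ⊔ principal (f a)
      set N : Order.Ideal E := M ⊔ Order.Ideal.principal (f a) with hN
      have hNM : N ≠ M := by
        intro h
        apply hfaM
        rw [← h]
        exact le_sup_right (a := M) (Order.Ideal.mem_principal.mpr le_rfl)
      have hNuniv : (N : Set E) = Set.univ := by
        by_contra h
        exact hNM (hMmax N h le_sup_left)
      have htopN : ⊤ ∈ N := by
        have : (⊤ : E) ∈ (N : Set E) := by rw [hNuniv]; trivial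
        exact this
      -- so ⊤ ≤ m ⊔ f a for some m ∈ M
      rw [hN, Order.Ideal.mem_sup] at htopN
      obtain ⟨m, hm, x, hx, htople⟩ := htopN
      have hx' : x ≤ f a := Order.Ideal.mem_principal.mp hx
      have hmfa : m ⊔ f a = ⊤ :=
        top_le_iff.mp (le_trans htople (sup_le_sup_left hx' m))
      obtain ⟨b, rfl⟩ := hsurj m
      have hab : a ⊔ b = ⊤ := by
        rw [hsuptop, sup_comm]; exact hmfa
      obtain ⟨c, hc, hcb⟩ := ha b hab
      have : f c ⊔ f b = ⊤ := (hsuptop c b).mp hcb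
      have hfc : f c ∈ (M : Set E) := hMJ ⟨c, hc, rfl⟩
      have : (⊤ : E) ∈ M := by
        rw [← this]; exact M.sup_mem hfc hm
      apply hMne
      apply Set.eq_univ_of_forall
      intro y
      exact M.lower le_top this
    obtain ⟨c, hc, hfc⟩ := hfa
    have : equivRel a c := (hker a c).mp hfc.symm
    have : a ∈ chiSet (I : Set D) := ⟨c, hc, this.1⟩
    rwa [hchi] at this
  refine ⟨main, fun I => ?_⟩
  have h1 : xiSet ((chiIdeal I : Order.Ideal D) : Set D) = (chiIdeal I : Set D) :=
    main (chiIdeal I) (chiSet_idem I)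
  have h2 : (chiIdeal I : Set D) = chiSet (I : Set D) := rfl
  apply Set.Subset.antisymm (chiSet_subset_xiSet _)
  calc xiSet (I : Set D) ⊆ xiSet (chiSet (I : Set D)) := xiSet_mono (subset_chiSet _)
    _ = chiSet (I : Set D) := by rw [← h2, h1, h2]
end

section
/- Let D be a bounded distributive lattice and J a proper ideal such that for every c ∉ J there exists b ∈ J with b ∨ c ≡ ⊤ (where ≡ is the congruence induced by ⪯). Then b ∨ c = ⊤ for such b, c, and J is a maximal ideal of D. -/
theorem ideal_with_equiv_top_complements_is_maximal {D : Type*} [DistribLattice D] [BoundedOrder D]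
    (J : Order.Ideal D) (hproper : (J : Set D) ≠ Set.univ)
    (h : ∀ c ∉ J, ∃ b ∈ J, equivRel (b ⊔ c) ⊤) :
    (∀ b c : D, equivRel (b ⊔ c) ⊤ → b ⊔ c = ⊤) ∧ IsMaximalIdeal J := by
  have key : ∀ b c : D, equivRel (b ⊔ c) ⊤ → b ⊔ c = ⊤ := by
    intro b c ⟨_, h2⟩
    have := h2 ⊥ (by simp)
    simpa using this
  refine ⟨key, hproper, fun N hN hJN => ?_⟩
  apply le_antisymm _ hJN
  intro c hcN
  by_contra hcJ
  obtain ⟨b, hbJ, hbc⟩ := h c hcJ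
  have htop : b ⊔ c = ⊤ := key b c hbc
  have : (⊤ : D) ∈ N := htop ▸ N.sup_mem (hJN hbJ) hcN
  exact hN (Set.eq_univ_of_forall fun x => N.lower le_top this)
end
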